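/- Let n₂ ≥ 3 be a constant, and let G ∈ G_{n₁,n₂,p} with n₁ → ∞ and n₁^{−1/2} ≪ p ≪ n₁^{−1/3}. Then asymptotically almost surely: (i) no vertex of the part of size n₁ has degree ≥ 3; (ii) for every pair of vertices {y, y'} in the part of size n₂, the number of vertices in the large part adjacent to exactly {y, y'} is at least 1 (indeed is (1+o(1))p²n₁). -/

import Mathlib

open MeasureTheory Filter

/-- The Bernoulli measure on `Bool` with success probability `p`. -/
noncomputable def bern (p : ℝ) : Measure Bool :=
  (ENNReal.ofReal (1 - p)) • Measure.dirac false + (ENNReal.ofReal p) • Measure.dirac true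

/-- The random bipartite graph `G_{n₁,n₂,p}`. -/
noncomputable def bipMeasure (n₁ n₂ : ℕ) (p : ℝ) :
    Measure (Fin n₁ × Fin n₂ → Bool) :=
  Measure.pi fun _ => bern p

/-- The degree of a vertex `x` of the part of size `n₁`. -/
def degX {n₁ n₂ : ℕ} (ω : Fin n₁ × Fin n₂ → Bool) (x : Fin n₁) : ℕ :=
  (Finset.univ.filter fun y : Fin n₂ => ω (x, y) = true).card

/-!
Union bound over the two ways the event can fail. A vertex of `X` has three prescribed
neighbours with probability `p³`, so some vertex has degree `≥ 3` with probability at most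
`n₁ C(n₂,3) p³ = C(n₂,3) (p n₁^{1/3})³ → 0`. A vertex has neighbourhood exactly `{y, y'}` with
probability `q = p² (1-p)^{n₂-2}`, independently over the `n₁` rows, so a fixed pair is missed with
probability `(1-q)^{n₁} ≤ exp(-q n₁)`, and `q n₁ ~ (p n₁^{1/2})² → ∞`.
-/

open Finset
open scoped Topology

@[simp] lemma bern_true (p : ℝ) : bern p {true} = ENNReal.ofReal p := by simp [bern]

@[simp] lemma bern_false (p : ℝ) : bern p {false} = ENNReal.ofReal (1 - p) := by simp [bern]

lemma isProbabilityMeasure_bern {p : ℝ} (h0 : 0 ≤ p) (h1 : p ≤ 1) :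
    IsProbabilityMeasure (bern p) :=
  ⟨by simp [bern, ← ENNReal.ofReal_add (sub_nonneg.2 h1) h0]⟩

lemma isProbabilityMeasure_bipMeasure (n₁ n₂ : ℕ) {p : ℝ} (h0 : 0 ≤ p) (h1 : p ≤ 1) :
    IsProbabilityMeasure (bipMeasure n₁ n₂ p) :=
  have := isProbabilityMeasure_bern h0 h1
  Measure.pi.instIsProbabilityMeasure _

lemma bipMeasure_map_curry (n₁ n₂ : ℕ) {p : ℝ} (h0 : 0 ≤ p) (h1 : p ≤ 1) :
    (bipMeasure n₁ n₂ p).map (MeasurableEquiv.curry _ _ _) =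
      Measure.pi fun _ : Fin n₁ => Measure.pi fun _ : Fin n₂ => bern p := by
  have := isProbabilityMeasure_bern h0 h1
  simpa [bipMeasure, Measure.infinitePi_eq_pi] using
    Measure.infinitePi_map_curry (ι := Fin n₁) (κ := Fin n₂) fun _ _ => bern p

lemma bipMeasure_exists_le_degX_le (n₁ n₂ k : ℕ) {p : ℝ} (h0 : 0 ≤ p) (h1 : p ≤ 1) :
    bipMeasure n₁ n₂ p {ω | ∃ x, k ≤ degX ω x} ≤ n₁ * n₂.choose k * ENNReal.ofReal p ^ k := by
  have := isProbabilityMeasure_bern h0 h1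
  have hcover : {ω | ∃ x, k ≤ degX ω x} ⊆
      ⋃ xS ∈ (univ : Finset (Fin n₁)) ×ˢ powersetCard k univ,
        ((({xS.1} ×ˢ xS.2 : Finset (Fin n₁ × Fin n₂)) : Set (Fin n₁ × Fin n₂)).pi
          fun _ => {true}) := by
    rintro ω ⟨x, hx⟩
    obtain ⟨S, hS, rfl⟩ := exists_subset_card_eq hx
    simp only [Set.mem_iUnion]
    refine ⟨(x, S), by simp, ?_⟩
    intro i hi
    simp only [coe_product, coe_singleton, Set.mem_prod, Set.mem_singleton_iff, mem_coe] at hi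
    obtain ⟨a, b⟩ := i
    obtain ⟨rfl, hb⟩ := hi
    simpa [degX] using hS hb
  calc bipMeasure n₁ n₂ p {ω | ∃ x, k ≤ degX ω x}
      ≤ ∑ xS ∈ (univ : Finset (Fin n₁)) ×ˢ powersetCard k univ,
          bipMeasure n₁ n₂ p ((({xS.1} ×ˢ xS.2 : Finset (Fin n₁ × Fin n₂)) : Set _).pi
            fun _ => {true}) :=
        (measure_mono hcover).trans (measure_biUnion_finset_le _ _)
    _ = ∑ _xS ∈ (univ : Finset (Fin n₁)) ×ˢ powersetCard k univ, ENNReal.ofReal p ^ k := by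
        refine sum_congr rfl fun xS hxS => ?_
        rw [bipMeasure, Measure.pi_pi_finset, prod_const, bern_true, card_product, card_singleton,
          one_mul, mem_powersetCard_univ.1 (mem_product.1 hxS).2]
    _ = n₁ * n₂.choose k * ENNReal.ofReal p ^ k := by simp

lemma bipMeasure_forall_row_ne (n₁ n₂ : ℕ) {p : ℝ} (h0 : 0 ≤ p) (h1 : p ≤ 1)
    (g : Fin n₂ → Bool) :
    bipMeasure n₁ n₂ p {ω | ∀ x, (fun y => ω (x, y)) ≠ g} = (1 - ∏ y, bern p {g y}) ^ n₁ := by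
  have := isProbabilityMeasure_bern h0 h1
  have hrows : {ω : Fin n₁ × Fin n₂ → Bool | ∀ x, (fun y => ω (x, y)) ≠ g} =
      MeasurableEquiv.curry _ _ _ ⁻¹' Set.univ.pi fun _ => {g}ᶜ := by
    ext ω
    simp only [Set.mem_ofPred_eq, Set.mem_preimage, Set.mem_univ_pi, Set.mem_compl_singleton_iff]
    rfl
  rw [hrows, ← Measure.map_apply (MeasurableEquiv.measurable _) (.of_discrete),
    bipMeasure_map_curry n₁ n₂ h0 h1, Measure.pi_pi,
    prob_compl_eq_one_sub (measurableSet_singleton g), Measure.pi_singleton]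
  simp

lemma prod_bern_decide_mem {ι : Type*} [Fintype ι] [DecidableEq ι] {p : ℝ} (h0 : 0 ≤ p)
    (h1 : p ≤ 1) (S : Finset ι) :
    ∏ i, bern p {decide (i ∈ S)} = ENNReal.ofReal (p ^ #S * (1 - p) ^ (Fintype.card ι - #S)) := by
  rw [ENNReal.ofReal_mul (by positivity), ENNReal.ofReal_pow h0,
    ENNReal.ofReal_pow (sub_nonneg.2 h1), ← card_compl, ← Finset.prod_const, ← Finset.prod_const,
    ← Finset.prod_mul_prod_compl S]
  congr 1 <;> refine prod_congr rfl fun i hi => ?_ <;> simp_all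

lemma one_sub_ofReal_pow_le_ofReal_exp {q : ℝ} (hq : 0 ≤ q) (n : ℕ) :
    (1 - ENNReal.ofReal q) ^ n ≤ ENNReal.ofReal (Real.exp (-(q * n))) := by
  calc (1 - ENNReal.ofReal q) ^ n = ENNReal.ofReal (1 - q) ^ n := by
        rw [ENNReal.ofReal_sub 1 hq, ENNReal.ofReal_one]
    _ ≤ ENNReal.ofReal (Real.exp (-q)) ^ n := by
        gcongr
        exact Real.one_sub_le_exp_neg q
    _ = ENNReal.ofReal (Real.exp (-(q * n))) := by
        rw [← ENNReal.ofReal_pow (Real.exp_nonneg _), ← Real.exp_nat_mul]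
        ring_nf

lemma bipMeasure_exists_unsubdivided_pair_le (n₁ n₂ : ℕ) {p : ℝ} (h0 : 0 ≤ p) (h1 : p ≤ 1) :
    bipMeasure n₁ n₂ p {ω | ∃ y y' : Fin n₂, y ≠ y' ∧
        ∀ x, ¬ ∀ z, ω (x, z) = true ↔ (z = y ∨ z = y')} ≤
      n₂.choose 2 * ENNReal.ofReal (Real.exp (-(p ^ 2 * (1 - p) ^ (n₂ - 2) * n₁))) := by
  have hcover : {ω : Fin n₁ × Fin n₂ → Bool | ∃ y y' : Fin n₂, y ≠ y' ∧
        ∀ x, ¬ ∀ z, ω (x, z) = true ↔ (z = y ∨ z = y')} ⊆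
      ⋃ S ∈ powersetCard 2 (univ : Finset (Fin n₂)),
        {ω | ∀ x, (fun y => ω (x, y)) ≠ fun z => decide (z ∈ S)} := by
    rintro ω ⟨y, y', hne, hω⟩
    simp only [Set.mem_iUnion]
    refine ⟨{y, y'}, by simp [card_pair hne], fun x hx => hω x fun z => ?_⟩
    rw [congrFun hx z]
    simp
  calc _ ≤ ∑ S ∈ powersetCard 2 (univ : Finset (Fin n₂)),
          bipMeasure n₁ n₂ p {ω | ∀ x, (fun y => ω (x, y)) ≠ fun z => decide (z ∈ S)} :=
        (measure_mono hcover).trans (measure_biUnion_finset_le _ _)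
    _ ≤ ∑ _S ∈ powersetCard 2 (univ : Finset (Fin n₂)),
          ENNReal.ofReal (Real.exp (-(p ^ 2 * (1 - p) ^ (n₂ - 2) * n₁))) := by
        refine sum_le_sum fun S hS => ?_
        rw [mem_powersetCard_univ] at hS
        rw [bipMeasure_forall_row_ne n₁ n₂ h0 h1, prod_bern_decide_mem h0 h1, hS, Fintype.card_fin]
        exact one_sub_ofReal_pow_le_ofReal_exp (by have := sub_nonneg.2 h1; positivity) n₁
    _ = _ := by simp

lemma bipMeasure_compl_subdivision_le (n₁ n₂ : ℕ) {p : ℝ} (h0 : 0 ≤ p) (h1 : p ≤ 1) :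
    bipMeasure n₁ n₂ p {ω | (∀ x, degX ω x ≤ 2) ∧
        ∀ y y' : Fin n₂, y ≠ y' → ∃ x : Fin n₁, ∀ z, ω (x, z) = true ↔ (z = y ∨ z = y')}ᶜ ≤
      ENNReal.ofReal (n₂.choose 3 * (n₁ * p ^ 3) +
        n₂.choose 2 * Real.exp (-(p ^ 2 * (1 - p) ^ (n₂ - 2) * n₁))) := by
  have hcover : {ω | (∀ x, degX ω x ≤ 2) ∧
        ∀ y y' : Fin n₂, y ≠ y' → ∃ x : Fin n₁, ∀ z, ω (x, z) = true ↔ (z = y ∨ z = y')}ᶜ ⊆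
      {ω | ∃ x, 3 ≤ degX ω x} ∪ {ω | ∃ y y' : Fin n₂, y ≠ y' ∧
        ∀ x, ¬ ∀ z, ω (x, z) = true ↔ (z = y ∨ z = y')} := by
    intro ω hω
    simp only [Set.mem_compl_iff, Set.mem_ofPred_eq, Set.mem_union, not_and_or, not_forall,
      not_exists, not_le, exists_prop] at hω ⊢
    exact hω
  calc _ ≤ n₁ * n₂.choose 3 * ENNReal.ofReal p ^ 3 +
        n₂.choose 2 * ENNReal.ofReal (Real.exp (-(p ^ 2 * (1 - p) ^ (n₂ - 2) * n₁))) :=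
        (measure_mono hcover).trans <| (measure_union_le _ _).trans <|
          add_le_add (bipMeasure_exists_le_degX_le n₁ n₂ 3 h0 h1)
            (bipMeasure_exists_unsubdivided_pair_le n₁ n₂ h0 h1)
    _ = _ := by
        rw [ENNReal.ofReal_add (by positivity) (by positivity), ENNReal.ofReal_mul (by positivity),
          ENNReal.ofReal_mul (by positivity), ENNReal.ofReal_mul (by positivity),
          ENNReal.ofReal_pow h0]
        simp only [ENNReal.ofReal_natCast]
        ring

lemma tendsto_measure_of_tendsto_measure_compl {ι : Type*} {l : Filter ι} {Ω : ι → Type*}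
    [∀ i, MeasurableSpace (Ω i)] {μ : ∀ i, Measure (Ω i)} [∀ i, IsProbabilityMeasure (μ i)]
    {s : ∀ i, Set (Ω i)} (hs : ∀ i, MeasurableSet (s i))
    (h : Tendsto (fun i => μ i (s i)ᶜ) l (𝓝 0)) : Tendsto (fun i => μ i (s i)) l (𝓝 1) := by
  have := ENNReal.Tendsto.sub tendsto_const_nhds h (Or.inl ENNReal.one_ne_top)
  rw [tsub_zero] at this
  refine this.congr fun i => ?_
  rw [← prob_compl_eq_one_sub (hs i).compl, compl_compl]

section Asymptotics

variable {ι : Type*} {l : Filter ι} {n : ι → ℕ} {p : ι → ℝ}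

lemma mul_rpow_one_div_pow (a : ℝ) {x : ℝ} (hx : 0 ≤ x) {m : ℕ} (hm : m ≠ 0) :
    (a * x ^ ((1 : ℝ) / m)) ^ m = x * a ^ m := by
  rw [mul_pow, one_div, Real.rpow_inv_natCast_pow hx hm, mul_comm]

lemma tendsto_natCast_mul_pow_three
    (h : Tendsto (fun i => p i * (n i : ℝ) ^ ((1 : ℝ) / 3)) l (𝓝 0)) :
    Tendsto (fun i => (n i : ℝ) * p i ^ 3) l (𝓝 0) := by
  refine (zero_pow three_ne_zero (M₀ := ℝ) ▸ h.pow 3).congr fun i => ?_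
  simpa using mul_rpow_one_div_pow (p i) (Nat.cast_nonneg (n i)) three_ne_zero

lemma tendsto_natCast_mul_sq
    (h : Tendsto (fun i => p i * (n i : ℝ) ^ ((1 : ℝ) / 2)) l atTop) :
    Tendsto (fun i => (n i : ℝ) * p i ^ 2) l atTop := by
  refine ((tendsto_pow_atTop two_ne_zero).comp h).congr fun i => ?_
  simpa using mul_rpow_one_div_pow (p i) (Nat.cast_nonneg (n i)) two_ne_zero

lemma tendsto_zero_of_tendsto_mul_rpow {r : ℝ} (hr : 0 ≤ r) (hn : Tendsto n l atTop)
    (hp : ∀ i, 0 ≤ p i) (h : Tendsto (fun i => p i * (n i : ℝ) ^ r) l (𝓝 0)) :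
    Tendsto p l (𝓝 0) := by
  refine tendsto_of_tendsto_of_tendsto_of_le_of_le' tendsto_const_nhds h
    (.of_forall hp) ?_
  filter_upwards [hn.eventually_ge_atTop 1] with i hi
  exact le_mul_of_one_le_right (hp i) (Real.one_le_rpow (by exact_mod_cast hi) hr)

lemma tendsto_exp_neg_sq_mul_one_sub_pow_mul (hn : Tendsto n l atTop) (hp : ∀ i, 0 ≤ p i)
    (hlarge : Tendsto (fun i => p i * (n i : ℝ) ^ ((1 : ℝ) / 2)) l atTop)
    (hsmall : Tendsto (fun i => p i * (n i : ℝ) ^ ((1 : ℝ) / 3)) l (𝓝 0)) (m : ℕ) :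
    Tendsto (fun i => Real.exp (-(p i ^ 2 * (1 - p i) ^ m * n i))) l (𝓝 0) := by
  have hp0 := tendsto_zero_of_tendsto_mul_rpow (by norm_num) hn hp hsmall
  have hone : Tendsto (fun i => (1 - p i) ^ m) l (𝓝 1) := by
    simpa using ((tendsto_const_nhds (x := (1 : ℝ))).sub hp0).pow m
  have hexponent : Tendsto (fun i => p i ^ 2 * (1 - p i) ^ m * n i) l atTop :=
    ((tendsto_natCast_mul_sq hlarge).atTop_mul_pos one_pos hone).congr fun i => by ring
  exact Real.tendsto_exp_atBot.comp (tendsto_neg_atTop_atBot.comp hexponent)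

end Asymptotics

theorem subdivision_of_complete_graph_general (n₂ : ℕ)
    (n₁ : ℕ → ℕ) (p : ℕ → ℝ) (hp : ∀ k, 0 ≤ p k ∧ p k ≤ 1)
    (hn₁ : Tendsto n₁ atTop atTop)
    (hplarge : Tendsto (fun k => p k * (n₁ k : ℝ) ^ ((1 : ℝ) / 2)) atTop atTop)
    (hpsmall : Tendsto (fun k => p k * (n₁ k : ℝ) ^ ((1 : ℝ) / 3)) atTop (nhds 0)) :
    Tendsto
      (fun k => bipMeasure (n₁ k) n₂ (p k)
        {ω | (∀ x, degX ω x ≤ 2) ∧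
          ∀ y y' : Fin n₂, y ≠ y' →
            ∃ x : Fin (n₁ k), ∀ z : Fin n₂, ω (x, z) = true ↔ (z = y ∨ z = y')})
      atTop (nhds 1) := by
  have := fun k => isProbabilityMeasure_bipMeasure (n₁ k) n₂ (hp k).1 (hp k).2
  refine tendsto_measure_of_tendsto_measure_compl (fun _ => .of_discrete) ?_
  have hbound := ((tendsto_natCast_mul_pow_three hpsmall).const_mul (n₂.choose 3 : ℝ)).add
    ((tendsto_exp_neg_sq_mul_one_sub_pow_mul hn₁ (fun k => (hp k).1) hplarge hpsmall
      (n₂ - 2)).const_mul (n₂.choose 2 : ℝ))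
  rw [mul_zero, mul_zero, add_zero] at hbound
  refine tendsto_of_tendsto_of_tendsto_of_le_of_le tendsto_const_nhds
    (ENNReal.ofReal_zero ▸ ENNReal.tendsto_ofReal hbound) (fun _ => zero_le)
    fun k => bipMeasure_compl_subdivision_le (n₁ k) n₂ (hp k).1 (hp k).2

/-- Let `n₂ ≥ 3` be constant and `G ∈ G_{n₁,n₂,p}` with `n₁ → ∞` and
`n₁^{−1/2} ≪ p ≪ n₁^{−1/3}`.  Then a.a.s. (i) no vertex of the part of size
`n₁` has degree ≥ 3, and (ii) for every pair `{y, y'}` of vertices in the part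
of size `n₂` there is at least one vertex of the large part whose neighbourhood
is exactly `{y, y'}`. -/
theorem subdivision_of_complete_graph (n₂ : ℕ) (hn₂ : 3 ≤ n₂)
    (n₁ : ℕ → ℕ) (p : ℕ → ℝ) (hp : ∀ k, 0 ≤ p k ∧ p k ≤ 1)
    (hn₁ : Tendsto n₁ atTop atTop)
    (hplarge : Tendsto (fun k => p k * (n₁ k : ℝ) ^ ((1 : ℝ) / 2)) atTop atTop)
    (hpsmall : Tendsto (fun k => p k * (n₁ k : ℝ) ^ ((1 : ℝ) / 3)) atTop (nhds 0)) :
    Tendsto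
      (fun k => bipMeasure (n₁ k) n₂ (p k)
        {ω | (∀ x, degX ω x ≤ 2) ∧
          ∀ y y' : Fin n₂, y ≠ y' →
            ∃ x : Fin (n₁ k), ∀ z : Fin n₂, ω (x, z) = true ↔ (z = y ∨ z = y')})
      atTop (nhds 1) :=
  subdivision_of_complete_graph_general n₂ n₁ p hp hn₁ hplarge hpsmall
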